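/- Let P, P' be patches contained in tilings of Ω, t₁, t₂ ∈ P and t₁', t₂' ∈ P' with x(t₂) = 0 and x(t₁') = 0. Then: (i) the composition V(P, t₁, t₂) ∘ V(P', t₁', t₂') = {(T, T'') : there exists T' with (T, T') ∈ V(P, t₁, t₂) and (T', T'') ∈ V(P', t₁', t₂')} equals V(P ∪ P', t₁, t₂') if P ∪ P' is a partial tiling (i.e. P and P' agree on the overlap of their supports), and is empty otherwise; (ii) the transpose {(T', T) : (T, T') ∈ V(P, t₁, t₂)} equals V(P, t₂, t₁). -/

import Mathlib

open Metric Set Pointwise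

noncomputable section

/-- Points of `ℝ^d`. -/
abbrev Pt (d : ℕ) := EuclideanSpace ℝ (Fin d)

/-- A (possibly labelled) tile in `ℝ^d`: a subset of `ℝ^d` together with a label. -/
structure Tile (d : ℕ) where
  carrier : Set (Pt d)
  label : ℕ

instance {d : ℕ} : Inhabited (Tile d) := ⟨⟨∅, 0⟩⟩

/-- Translate of a tile by a vector. -/
def Tile.translate {d : ℕ} (t : Tile d) (x : Pt d) : Tile d :=
  ⟨(fun y => y + x) '' t.carrier, t.label⟩

/-- A tile proper: homeomorphic to the closed unit ball. -/
def Tile.IsTile {d : ℕ} (t : Tile d) : Prop :=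
  Nonempty (t.carrier ≃ₜ (Metric.closedBall (0 : Pt d) 1))

/-- Support of a partial tiling: the union of its tiles. -/
def psupp {d : ℕ} (P : Set (Tile d)) : Set (Pt d) := ⋃ t ∈ P, t.carrier

/-- `tilesAt P U` = the tiles of `P` meeting `U`, written `P(U)` in the paper. -/
def tilesAt {d : ℕ} (P : Set (Tile d)) (U : Set (Pt d)) : Set (Tile d) :=
  {t ∈ P | (t.carrier ∩ U).Nonempty}

/-- Translate of a collection of tiles. -/
def translateSet {d : ℕ} (P : Set (Tile d)) (x : Pt d) : Set (Tile d) :=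
  (fun t => t.translate x) '' P

/-- A partial tiling: tiles with pairwise disjoint interiors. -/
def IsPartialTiling {d : ℕ} (P : Set (Tile d)) : Prop :=
  (∀ t ∈ P, t.IsTile) ∧
  ∀ t ∈ P, ∀ t' ∈ P, t ≠ t' → interior t.carrier ∩ interior t'.carrier = ∅

/-- A patch: a finite partial tiling. -/
def IsPatch {d : ℕ} (P : Set (Tile d)) : Prop := IsPartialTiling P ∧ P.Finite

/-- A tiling of all of `ℝ^d`. -/
def IsTilingOfSpace {d : ℕ} (P : Set (Tile d)) : Prop :=
  IsPartialTiling P ∧ psupp P = univ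

/-- A substitution tiling system `(𝒫, ω)` with inflation constant `λ > 1`. -/
structure SubstSystem (d : ℕ) where
  proto : Set (Tile d)
  proto_finite : proto.Finite
  proto_nonempty : proto.Nonempty
  proto_isTile : ∀ p ∈ proto, p.IsTile
  proto_zero_mem : ∀ p ∈ proto, (0 : Pt d) ∈ interior p.carrier
  proto_no_translate : ∀ p ∈ proto, ∀ q ∈ proto, ∀ x : Pt d,
    q = p.translate x → p = q ∧ x = 0
  lam : ℝ
  one_lt_lam : 1 < lam
  sub : Tile d → Set (Tile d)
  sub_patch : ∀ p ∈ proto, IsPatch (sub p)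
  sub_proto : ∀ p ∈ proto, ∀ t ∈ sub p, ∃ q ∈ proto, ∃ x : Pt d, t = q.translate x
  sub_supp : ∀ p ∈ proto, psupp (sub p) = lam • p.carrier
  sub_translate : ∀ (t : Tile d) (x : Pt d),
    sub (t.translate x) = (fun s => s.translate (lam • x)) '' sub t

namespace SubstSystem

variable {d : ℕ} (S : SubstSystem d)

/-- Tile-wise application of the substitution to a collection of tiles. -/
def subSet (P : Set (Tile d)) : Set (Tile d) := ⋃ t ∈ P, S.sub t

/-- Iterated substitution `ω^n` on collections of tiles. -/
def subIter (n : ℕ) (P : Set (Tile d)) : Set (Tile d) := (S.subSet)^[n] P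

/-- `ω^n(t)` for a single tile `t`. -/
def omegan (n : ℕ) (t : Tile d) : Set (Tile d) := S.subIter n {t}

/-- The continuous hull `Ω`. -/
def Omega : Set (Set (Tile d)) :=
  {T | IsTilingOfSpace T ∧ ∀ P : Set (Tile d), P ⊆ T → IsPatch P →
    ∃ n : ℕ, ∃ p ∈ S.proto, ∃ x : Pt d, P ⊆ translateSet (S.omegan n p) x}

/-- `x` is the puncture of the tile `t`, i.e. `t = p + x` for a prototile `p`. -/
def IsPuncture (t : Tile d) (x : Pt d) : Prop :=
  ∃ p ∈ S.proto, t = p.translate x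

open Classical in
/-- The puncture `x(t)` of a tile `t` (chosen; unique for translates of prototiles). -/
def punc (t : Tile d) : Pt d :=
  if h : ∃ x : Pt d, S.IsPuncture t x then h.choose else 0

/-- The punctured hull (transversal) `Ω_punc`. -/
def OmegaPunc : Set (Set (Tile d)) :=
  {T ∈ S.Omega | ∃ t ∈ T, S.IsPuncture t 0}

end SubstSystem

/-- The tiling metric. -/
def tilingDist {d : ℕ} (T T' : Set (Tile d)) : ℝ :=
  sInf ({1} ∪ {ε : ℝ | 0 < ε ∧ ∃ x x' : Pt d, ‖x‖ < ε ∧ ‖x'‖ < ε ∧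
    tilesAt (translateSet T (-x)) (ball (0 : Pt d) (1 / ε)) =
      tilesAt (translateSet T' (-x')) (ball (0 : Pt d) (1 / ε))})

namespace SubstSystem

variable {d : ℕ} (S : SubstSystem d)

/-- Density of a family of tilings in `Ω_punc` w.r.t. the tiling metric. -/
def DenseInPunc (E : Set (Set (Tile d))) : Prop :=
  ∀ T ∈ S.OmegaPunc, ∀ ε : ℝ, 0 < ε → ∃ T' ∈ E, tilingDist T T' < ε

/-- Openness of a subset of `Ω_punc` w.r.t. the tiling metric (subspace topology). -/
def OpenInPunc (E : Set (Set (Tile d))) : Prop :=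
  E ⊆ S.OmegaPunc ∧ ∀ T ∈ E, ∃ ε : ℝ, 0 < ε ∧
    ∀ T' ∈ S.OmegaPunc, tilingDist T T' < ε → T' ∈ E

/-- The translational equivalence relation `R_punc` on `Ω_punc`. -/
def Rpunc : Set (Set (Tile d) × Set (Tile d)) :=
  {TT | TT.1 ∈ S.OmegaPunc ∧ TT.2 ∈ S.OmegaPunc ∧ ∃ x : Pt d, TT.2 = translateSet TT.1 x}

/-- `Punc(n, p)`: the punctures of the tiles of `ω^n(p)`. -/
def Punc (n : ℕ) (p : Tile d) : Set (Pt d) :=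
  {x | ∃ t ∈ S.omegan n p, S.IsPuncture t x}

/-- `E^n_p(x, y)`. -/
def Eset (n : ℕ) (p : Tile d) (x y : Pt d) : Set (Set (Tile d) × Set (Tile d)) :=
  {TT | ∃ T ∈ S.OmegaPunc, p ∈ T ∧
    TT.1 = translateSet (S.subIter n T) (-x) ∧ TT.2 = translateSet (S.subIter n T) (-y)}

/-- `R_n`. -/
def Rn (n : ℕ) : Set (Set (Tile d) × Set (Tile d)) :=
  ⋃ p ∈ S.proto, ⋃ x ∈ S.Punc n p, ⋃ y ∈ S.Punc n p, S.Eset n p x y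

/-- `R_AF = ∪ₙ R_n`. -/
def RAF : Set (Set (Tile d) × Set (Tile d)) := ⋃ n : ℕ, S.Rn n

/-- `U(P, t)`. -/
def Uset (P : Set (Tile d)) (t : Tile d) : Set (Set (Tile d)) :=
  {T ∈ S.OmegaPunc | translateSet P (-(S.punc t)) ⊆ T}

/-- `V(P, t₁, t₂)`. -/
def Vset (P : Set (Tile d)) (t₁ t₂ : Tile d) : Set (Set (Tile d) × Set (Tile d)) :=
  {TT | TT.1 ∈ S.Uset P t₁ ∧ TT.2 = translateSet TT.1 (S.punc t₁ - S.punc t₂)}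

/-- (A1) primitivity. -/
def Primitive : Prop :=
  ∃ N : ℕ, ∀ p ∈ S.proto, ∀ q ∈ S.proto, ∃ x : Pt d, Tile.translate q x ∈ S.omegan N p

/-- (A2) finite local complexity. -/
def FLC : Prop :=
  ∀ R : ℝ, 0 < R → ∃ Ps : Set (Set (Tile d)), Ps.Finite ∧
    ∀ P : Set (Tile d), IsPatch P → Metric.diam (psupp P) < R →
      (∃ T ∈ S.Omega, P ⊆ T) → ∃ P₀ ∈ Ps, ∃ x : Pt d, P = translateSet P₀ x

/-- (A3) `ω : Ω → Ω` is bijective. -/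
def SubBijective : Prop := Set.BijOn S.subSet S.Omega S.Omega

/-- (A4) `ω` forces its border. -/
def ForcesBorder : Prop :=
  ∃ n : ℕ, ∀ p ∈ S.proto, ∀ T ∈ S.Omega, ∀ T' ∈ S.Omega, ∀ x x' : Pt d,
    translateSet (S.omegan n p) x ⊆ T → translateSet (S.omegan n p) x' ⊆ T' →
    translateSet (tilesAt T ((fun y => y + x) '' psupp (S.omegan n p))) (-x) =
      translateSet (tilesAt T' ((fun y => y + x') '' psupp (S.omegan n p))) (-x')

/-- Prototile boundaries have box-counting dimension strictly less than `d`. -/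
def SmallBoundary : Prop :=
  ∃ c : ℝ, c < d ∧ ∃ K₀ : ℝ, ∀ p ∈ S.proto, ∀ ε : ℝ, 0 < ε →
    ∃ centers : Finset (Pt d), (centers.card : ℝ) ≤ K₀ * ε ^ (-c) ∧
      frontier p.carrier ⊆ ⋃ z ∈ centers, ball z ε

end SubstSystem

/-- A symmetry group action for `(𝒫, ω)`: `G ≤ O(d, ℝ)` acting on tiles, preserving
the prototile set and commuting with the substitution. -/
structure SymmAction {d : ℕ} (S : SubstSystem d) (G : Subgroup (Pt d ≃ₗᵢ[ℝ] Pt d)) where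
  act : G → Tile d → Tile d
  act_carrier : ∀ (g : G) (t : Tile d),
    (act g t).carrier = (g : Pt d ≃ₗᵢ[ℝ] Pt d) '' t.carrier
  act_one : ∀ t : Tile d, act 1 t = t
  act_mul : ∀ (g h : G) (t : Tile d), act (g * h) t = act g (act h t)
  act_proto : ∀ (g : G), ∀ p ∈ S.proto, act g p ∈ S.proto
  act_translate : ∀ (g : G) (t : Tile d) (x : Pt d),
    act g (t.translate x) = (act g t).translate ((g : Pt d ≃ₗᵢ[ℝ] Pt d) x)
  act_sub : ∀ (g : G), ∀ p ∈ S.proto, S.sub (act g p) = act g '' S.sub p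

/-- Action of a group element on a (partial) tiling: `gT = {gt : t ∈ T}`. -/
def SymmAction.actSet {d : ℕ} {S : SubstSystem d} {G : Subgroup (Pt d ≃ₗᵢ[ℝ] Pt d)}
    (σ : SymmAction S G) (g : G) (T : Set (Tile d)) : Set (Tile d) := σ.act g '' T

/-- `G` acts freely on the prototile set. -/
def SymmAction.FreeOnProto {d : ℕ} {S : SubstSystem d} {G : Subgroup (Pt d ≃ₗᵢ[ℝ] Pt d)}
    (σ : SymmAction S G) : Prop := ∀ g : G, ∀ p ∈ S.proto, σ.act g p = p → g = 1

/-- Composition of relations. -/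
def relComp {α : Type*} (R₁ R₂ : Set (α × α)) : Set (α × α) :=
  {q | ∃ z : α, (q.1, z) ∈ R₁ ∧ (z, q.2) ∈ R₂}

/-- Transpose (inverse) of a relation. -/
def relTrans {α : Type*} (R : Set (α × α)) : Set (α × α) := {q | (q.2, q.1) ∈ R}

end

/-!
An element of `V(P, t₁, t₂)` is the pair of translates `(T - x(t₁), T - x(t₂))` of a single
tiling `T ∈ Ω` containing `P`. In this symmetric description the transpose just swaps `t₁` and
`t₂`, and when `x(t₂) = x(t₁')` a composite of `V(P, t₁, t₂)` and `V(P', t₁', t₂')` passes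
through one tiling containing both `P` and `P'`, which forces `P ∪ P'` to be a partial tiling.
-/

section Translation

variable {d : ℕ}

@[simp]
theorem Tile.translate_translate (t : Tile d) (x y : Pt d) :
    (t.translate x).translate y = t.translate (x + y) := by
  simp only [Tile.translate, Set.image_image, add_assoc]

@[simp]
theorem Tile.translate_zero (t : Tile d) : t.translate 0 = t := by
  simp [Tile.translate]

@[simp]
theorem translateSet_translateSet (P : Set (Tile d)) (x y : Pt d) :
    translateSet (translateSet P x) y = translateSet P (x + y) := by
  simp only [translateSet, Set.image_image, Tile.translate_translate]

@[simp]
theorem translateSet_zero (P : Set (Tile d)) : translateSet P 0 = P := by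
  simp [translateSet]

theorem translateSet_mono {P Q : Set (Tile d)} (h : P ⊆ Q) (x : Pt d) :
    translateSet P x ⊆ translateSet Q x :=
  Set.image_mono h

theorem translateSet_injective (x : Pt d) : Function.Injective (translateSet · x) :=
  fun P Q h => by simpa using congrArg (translateSet · (-x)) h

theorem subset_translateSet_iff {P T : Set (Tile d)} {x : Pt d} :
    P ⊆ translateSet T x ↔ translateSet P (-x) ⊆ T := by
  constructor
  · intro h
    simpa using translateSet_mono h (-x)
  · intro h
    simpa using translateSet_mono h x

theorem psupp_translateSet (P : Set (Tile d)) (x : Pt d) :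
    psupp (translateSet P x) = (· + x) '' psupp P := by
  simp only [psupp, translateSet, Set.biUnion_image, Set.image_iUnion]
  rfl

theorem Tile.IsTile.translate {t : Tile d} (h : t.IsTile) (x : Pt d) :
    (t.translate x).IsTile :=
  let ⟨e⟩ := h
  ⟨((Homeomorph.addRight x).image t.carrier).symm.trans e⟩

theorem IsPartialTiling.translate {P : Set (Tile d)} (h : IsPartialTiling P) (x : Pt d) :
    IsPartialTiling (translateSet P x) := by
  refine ⟨?_, ?_⟩
  · rintro _ ⟨t, ht, rfl⟩
    exact (h.1 t ht).translate x
  · rintro _ ⟨t, ht, rfl⟩ _ ⟨t', ht', rfl⟩ hne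
    have hne' : t ≠ t' := fun h => hne (h ▸ rfl)
    change interior ((Homeomorph.addRight x) '' t.carrier) ∩
      interior ((Homeomorph.addRight x) '' t'.carrier) = ∅
    rw [← Homeomorph.image_interior, ← Homeomorph.image_interior,
      ← Set.image_inter (Homeomorph.addRight x).injective, h.2 t ht t' ht' hne', Set.image_empty]

theorem IsPartialTiling.mono {P Q : Set (Tile d)} (h : IsPartialTiling Q) (hPQ : P ⊆ Q) :
    IsPartialTiling P :=
  ⟨fun t ht => h.1 t (hPQ ht), fun t ht t' ht' => h.2 t (hPQ ht) t' (hPQ ht')⟩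

theorem IsPatch.translate {P : Set (Tile d)} (h : IsPatch P) (x : Pt d) :
    IsPatch (translateSet P x) :=
  ⟨h.1.translate x, h.2.image _⟩

end Translation

namespace SubstSystem

variable {d : ℕ} {S : SubstSystem d}

theorem translateSet_mem_Omega {T : Set (Tile d)} (hT : T ∈ S.Omega) (x : Pt d) :
    translateSet T x ∈ S.Omega := by
  obtain ⟨⟨hpt, hsupp⟩, hpatch⟩ := hT
  refine ⟨⟨hpt.translate x, ?_⟩, fun Q hQT hQ => ?_⟩
  · rw [psupp_translateSet, hsupp, Set.image_univ]
    exact Set.range_eq_univ.2 fun y => ⟨y - x, sub_add_cancel y x⟩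
  · obtain ⟨n, p, hp, y, hy⟩ :=
      hpatch _ (subset_translateSet_iff.1 hQT) (hQ.translate (-x))
    refine ⟨n, p, hp, y + x, ?_⟩
    simpa using subset_translateSet_iff.2 hy

theorem IsPuncture.translate {t : Tile d} {x : Pt d} (h : S.IsPuncture t x) (y : Pt d) :
    S.IsPuncture (t.translate y) (x + y) :=
  let ⟨p, hp, hpt⟩ := h
  ⟨p, hp, by rw [hpt, Tile.translate_translate]⟩

theorem exists_isPuncture_of_mem_sub {t s : Tile d} (hs : ∃ x, S.IsPuncture s x)
    (ht : t ∈ S.sub s) : ∃ x, S.IsPuncture t x := by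
  obtain ⟨x, p, hp, rfl⟩ := hs
  rw [S.sub_translate] at ht
  obtain ⟨t, ht, rfl⟩ := ht
  obtain ⟨q, hq, y, rfl⟩ := S.sub_proto p hp t ht
  exact ⟨y + S.lam • x, q, hq, Tile.translate_translate q y _⟩

theorem exists_isPuncture_of_mem_omegan {p t : Tile d} (hp : p ∈ S.proto) {n : ℕ}
    (ht : t ∈ S.omegan n p) : ∃ x, S.IsPuncture t x := by
  induction n generalizing t with
  | zero => exact ⟨0, p, hp, by rw [Set.mem_singleton_iff.1 ht, Tile.translate_zero]⟩
  | succ n ih =>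
    rw [omegan, subIter, Function.iterate_succ_apply'] at ht
    obtain ⟨s, hs, hts⟩ := Set.mem_iUnion₂.1 ht
    exact exists_isPuncture_of_mem_sub (ih hs) hts

theorem exists_isPuncture_of_mem_Omega {T : Set (Tile d)} (hT : T ∈ S.Omega) {t : Tile d}
    (ht : t ∈ T) : ∃ x, S.IsPuncture t x := by
  have hpatch : IsPatch {t} :=
    ⟨hT.1.1.mono (Set.singleton_subset_iff.2 ht), Set.finite_singleton t⟩
  obtain ⟨n, p, hp, x, hx⟩ := hT.2 {t} (Set.singleton_subset_iff.2 ht) hpatch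
  obtain ⟨s, hs, rfl⟩ := hx rfl
  obtain ⟨y, hy⟩ := exists_isPuncture_of_mem_omegan hp hs
  exact ⟨y + x, hy.translate x⟩

theorem isPuncture_punc {T : Set (Tile d)} (hT : T ∈ S.Omega) {t : Tile d} (ht : t ∈ T) :
    S.IsPuncture t (S.punc t) := by
  have h := exists_isPuncture_of_mem_Omega hT ht
  rw [punc, dif_pos h]
  exact h.choose_spec

theorem translateSet_neg_punc_mem_OmegaPunc {T : Set (Tile d)} (hT : T ∈ S.Omega)
    {t : Tile d} (ht : t ∈ T) : translateSet T (-S.punc t) ∈ S.OmegaPunc :=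
  ⟨translateSet_mem_Omega hT _, t.translate (-S.punc t), Set.mem_image_of_mem _ ht,
    by simpa using (isPuncture_punc hT ht).translate (-S.punc t)⟩

theorem mem_Vset_iff {P : Set (Tile d)} {t₁ : Tile d} (ht₁ : t₁ ∈ P) (t₂ : Tile d)
    {TT : Set (Tile d) × Set (Tile d)} :
    TT ∈ S.Vset P t₁ t₂ ↔ ∃ T ∈ S.Omega, P ⊆ T ∧
      TT = (translateSet T (-S.punc t₁), translateSet T (-S.punc t₂)) := by
  constructor
  · rintro ⟨⟨hT, hPT⟩, hT'⟩
    refine ⟨translateSet TT.1 (S.punc t₁), translateSet_mem_Omega hT.1 _,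
      subset_translateSet_iff.2 hPT, Prod.ext (by simp) ?_⟩
    simp [hT', sub_eq_add_neg]
  · rintro ⟨T, hT, hPT, rfl⟩
    refine ⟨⟨translateSet_neg_punc_mem_OmegaPunc hT (hPT ht₁), translateSet_mono hPT _⟩, ?_⟩
    simp only [translateSet_translateSet]
    abel_nf

theorem isPartialTiling_of_mem_Vset {P : Set (Tile d)} {t₁ t₂ : Tile d} (ht₁ : t₁ ∈ P)
    {TT : Set (Tile d) × Set (Tile d)} (h : TT ∈ S.Vset P t₁ t₂) : IsPartialTiling P :=
  let ⟨_, hT, hPT, _⟩ := (mem_Vset_iff ht₁ t₂).1 h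
  hT.1.1.mono hPT

theorem relComp_Vset {P P' : Set (Tile d)} {t₁ t₂ t₁' : Tile d} (ht₁ : t₁ ∈ P)
    (ht₁' : t₁' ∈ P') (t₂' : Tile d) (hpunc : S.punc t₂ = S.punc t₁') :
    relComp (S.Vset P t₁ t₂) (S.Vset P' t₁' t₂') = S.Vset (P ∪ P') t₁ t₂' := by
  ext TT
  rw [mem_Vset_iff (Or.inl ht₁)]
  constructor
  · rintro ⟨T', h, h'⟩
    obtain ⟨T, hT, hPT, hTT⟩ := (mem_Vset_iff ht₁ t₂).1 h
    obtain ⟨U, -, hP'U, hTT'⟩ := (mem_Vset_iff ht₁' t₂').1 h'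
    simp only [Prod.ext_iff] at hTT hTT'
    -- the middle tiling is `T - x(t₂) = U - x(t₁')`, so `T = U`
    obtain rfl : T = U := translateSet_injective _ (hpunc ▸ hTT.2.symm.trans hTT'.1)
    exact ⟨T, hT, Set.union_subset hPT hP'U, Prod.ext hTT.1 hTT'.2⟩
  · rintro ⟨T, hT, hPT, rfl⟩
    refine ⟨translateSet T (-S.punc t₂), (mem_Vset_iff ht₁ t₂).2 ?_, (mem_Vset_iff ht₁' t₂').2 ?_⟩
    · exact ⟨T, hT, Set.subset_union_left.trans hPT, rfl⟩
    · exact ⟨T, hT, Set.subset_union_right.trans hPT, by rw [hpunc]⟩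

theorem relTrans_Vset {P : Set (Tile d)} {t₁ t₂ : Tile d} (ht₁ : t₁ ∈ P) (ht₂ : t₂ ∈ P) :
    relTrans (S.Vset P t₁ t₂) = S.Vset P t₂ t₁ := by
  ext ⟨T, T'⟩
  simp only [relTrans, Set.mem_ofPred_eq, mem_Vset_iff ht₁, mem_Vset_iff ht₂, Prod.mk.injEq,
    and_comm]

end SubstSystem

theorem stmt8_general {d : ℕ} (S : SubstSystem d)
    (P P' : Set (Tile d))
    (t₁ : Tile d) (ht₁ : t₁ ∈ P) (t₂ : Tile d) (ht₂ : t₂ ∈ P)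
    (t₁' : Tile d) (ht₁' : t₁' ∈ P') (t₂' : Tile d)
    (hx₂ : S.punc t₂ = 0) (hx₁' : S.punc t₁' = 0) :
    (IsPartialTiling (P ∪ P') →
      relComp (S.Vset P t₁ t₂) (S.Vset P' t₁' t₂') = S.Vset (P ∪ P') t₁ t₂') ∧
    (¬ IsPartialTiling (P ∪ P') →
      relComp (S.Vset P t₁ t₂) (S.Vset P' t₁' t₂') = ∅) ∧
    relTrans (S.Vset P t₁ t₂) = S.Vset P t₂ t₁ := by
  have hcomp := SubstSystem.relComp_Vset ht₁ ht₁' t₂' (hx₂.trans hx₁'.symm)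
  refine ⟨fun _ => hcomp, fun hP => ?_, SubstSystem.relTrans_Vset ht₁ ht₂⟩
  rw [hcomp, Set.eq_empty_iff_forall_notMem]
  exact fun _ h => hP (SubstSystem.isPartialTiling_of_mem_Vset (Or.inl ht₁) h)

/-- Composition and transpose of the basic graphs `V(P, t₁, t₂)`:
`V(P, t₁, t₂) ∘ V(P', t₁', t₂') = V(P ∪ P', t₁, t₂')` when `P ∪ P'` is a partial
tiling (with `x(t₂) = 0 = x(t₁')`), and is empty otherwise; the transpose of
`V(P, t₁, t₂)` is `V(P, t₂, t₁)`. -/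
theorem stmt8 {d : ℕ} (hd : 1 ≤ d) (S : SubstSystem d)
    (P P' : Set (Tile d)) (hP : IsPatch P) (hP' : IsPatch P')
    (hPT : ∃ T ∈ S.Omega, P ⊆ T) (hPT' : ∃ T ∈ S.Omega, P' ⊆ T)
    (t₁ : Tile d) (ht₁ : t₁ ∈ P) (t₂ : Tile d) (ht₂ : t₂ ∈ P)
    (t₁' : Tile d) (ht₁' : t₁' ∈ P') (t₂' : Tile d) (ht₂' : t₂' ∈ P')
    (hx₂ : S.punc t₂ = 0) (hx₁' : S.punc t₁' = 0) :
    (IsPartialTiling (P ∪ P') →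
      relComp (S.Vset P t₁ t₂) (S.Vset P' t₁' t₂') = S.Vset (P ∪ P') t₁ t₂') ∧
    (¬ IsPartialTiling (P ∪ P') →
      relComp (S.Vset P t₁ t₂) (S.Vset P' t₁' t₂') = ∅) ∧
    relTrans (S.Vset P t₁ t₂) = S.Vset P t₂ t₁ :=
  stmt8_general S P P' t₁ ht₁ t₂ ht₂ t₁' ht₁' t₂' hx₂ hx₁'
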